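/- arXiv:2010.03906 — 2 statements merged into one kernel-verified Lean document; each statement's English description precedes it below -/
import Mathlib

section
/- Cone Lemma: Let p ∈ ℝ^n, let F, G be m-dimensional subspaces of ℝ^n with ‖Π_F − Π_G‖ ≤ χ for some χ ≥ 0, and let σ, κ ≥ 0 satisfy (1+σ)χ < 1 and (σ + (1+σ)χ)/(1 − (1+σ)χ) ≤ κ. Then the cone C_p(σ,F) is contained in the cone C_p(κ,G). -/
open Metric Real Filter

noncomputable def pr {n : ℕ} (F : Submodule ℝ (EuclideanSpace ℝ (Fin n))) :
    EuclideanSpace ℝ (Fin n) →L[ℝ] EuclideanSpace ℝ (Fin n) :=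
  F.subtypeL.comp F.orthogonalProjection

noncomputable def graphSet {n : ℕ} (F : Submodule ℝ (EuclideanSpace ℝ (Fin n)))
    (u : F → Fᗮ) : Set (EuclideanSpace ℝ (Fin n)) :=
  Set.range fun z : F => (z : EuclideanSpace ℝ (Fin n)) + (u z : EuclideanSpace ℝ (Fin n))

noncomputable def cone {n : ℕ} (x : EuclideanSpace ℝ (Fin n)) (β : ℝ)
    (F : Submodule ℝ (EuclideanSpace ℝ (Fin n))) : Set (EuclideanSpace ℝ (Fin n)) :=
  {z | ‖pr Fᗮ (z - x)‖ ≤ β * ‖pr F (z - x)‖}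

/-!
Write `w = z - p = a + b = c + d` with `a, b` its components along `F, Fᗮ` and `c, d` those
along `G, Gᗮ`. The cone condition gives `‖b‖ ≤ σ‖a‖`, hence `‖w‖ ≤ (1+σ)‖a‖`, and so
`‖a - c‖ ≤ χ‖w‖ ≤ ε‖a‖` with `ε = (1+σ)χ`. Since `d - b = a - c`, the `Gᗮ`-component grows by at
most `ε‖a‖` while the `G`-component shrinks by at most as much:
`‖d‖ ≤ (σ + ε)‖a‖` and `(1 - ε)‖a‖ ≤ ‖c‖`, which is `‖d‖ ≤ κ‖c‖` under the hypothesis on `κ`.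
-/

section Perturbation

variable {E : Type*} [SeminormedAddCommGroup E] {a b c d : E} {σ ε : ℝ}

theorem norm_add_le_one_add_mul (hb : ‖b‖ ≤ σ * ‖a‖) : ‖a + b‖ ≤ (1 + σ) * ‖a‖ := by
  linarith [norm_add_le a b]

theorem norm_le_add_mul_of_add_eq_add (hsum : a + b = c + d) (hb : ‖b‖ ≤ σ * ‖a‖)
    (hac : ‖a - c‖ ≤ ε * ‖a‖) : ‖d‖ ≤ (σ + ε) * ‖a‖ := by
  have hd : d = b + (a - c) := by
    rw [← add_sub_cancel_left c d, ← hsum]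
    abel
  calc ‖d‖ ≤ ‖b‖ + ‖a - c‖ := hd ▸ norm_add_le _ _
    _ ≤ (σ + ε) * ‖a‖ := by linarith

theorem one_sub_mul_le_norm (hac : ‖a - c‖ ≤ ε * ‖a‖) : (1 - ε) * ‖a‖ ≤ ‖c‖ := by
  linarith [norm_sub_norm_le a c]

end Perturbation

theorem le_mul_of_le_mul_of_one_sub_mul_le {x y t s ε κ : ℝ} (hκ : 0 ≤ κ) (ht : 0 ≤ t)
    (hx : x ≤ s * t) (hy : (1 - ε) * t ≤ y) (hε : ε < 1) (hκs : s / (1 - ε) ≤ κ) :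
    x ≤ κ * y := by
  have hs : s ≤ κ * (1 - ε) := (div_le_iff₀ (sub_pos.mpr hε)).mp hκs
  calc x ≤ s * t := hx
    _ ≤ κ * (1 - ε) * t := mul_le_mul_of_nonneg_right hs ht
    _ ≤ κ * y := by rw [mul_assoc]; exact mul_le_mul_of_nonneg_left hy hκ

theorem pr_add_pr_orthogonal {n : ℕ} (F : Submodule ℝ (EuclideanSpace ℝ (Fin n)))
    (w : EuclideanSpace ℝ (Fin n)) : pr F w + pr Fᗮ w = w :=
  F.starProjection_add_starProjection_orthogonal w

theorem cone_lemma_general {n : ℕ} (p : EuclideanSpace ℝ (Fin n))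
    (F G : Submodule ℝ (EuclideanSpace ℝ (Fin n)))
    (χ σ κ : ℝ) (hχ : 0 ≤ χ) (hκ : 0 ≤ κ)
    (hang : ‖pr F - pr G‖ ≤ χ)
    (hlt : (1 + σ) * χ < 1)
    (hcond : (σ + (1 + σ) * χ) / (1 - (1 + σ) * χ) ≤ κ) :
    cone p σ F ⊆ cone p κ G := by
  intro z (hz : ‖pr Fᗮ (z - p)‖ ≤ σ * ‖pr F (z - p)‖)
  set w := z - p
  have hsum : pr F w + pr Fᗮ w = pr G w + pr Gᗮ w := by
    rw [pr_add_pr_orthogonal, pr_add_pr_orthogonal]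
  have hw : ‖w‖ ≤ (1 + σ) * ‖pr F w‖ := by
    simpa only [pr_add_pr_orthogonal] using norm_add_le_one_add_mul hz
  have hac : ‖pr F w - pr G w‖ ≤ (1 + σ) * χ * ‖pr F w‖ :=
    calc ‖pr F w - pr G w‖ = ‖(pr F - pr G) w‖ := rfl
      _ ≤ χ * ‖w‖ := (pr F - pr G).le_of_opNorm_le hang w
      _ ≤ χ * ((1 + σ) * ‖pr F w‖) := mul_le_mul_of_nonneg_left hw hχ
      _ = (1 + σ) * χ * ‖pr F w‖ := by ring
  exact le_mul_of_le_mul_of_one_sub_mul_le hκ (norm_nonneg _)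
    (norm_le_add_mul_of_add_eq_add hsum hz hac) (one_sub_mul_le_norm hac) hlt hcond

/-- Cone Lemma: if `∠(F,G) ≤ χ` and `(σ + (1+σ)χ)/(1-(1+σ)χ) ≤ κ`, then
`C_p(σ,F) ⊆ C_p(κ,G)`. -/
theorem cone_lemma {n m : ℕ} (p : EuclideanSpace ℝ (Fin n))
    (F G : Submodule ℝ (EuclideanSpace ℝ (Fin n)))
    (hF : Module.finrank ℝ F = m) (hG : Module.finrank ℝ G = m)
    (χ σ κ : ℝ) (hχ : 0 ≤ χ) (hσ : 0 ≤ σ) (hκ : 0 ≤ κ)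
    (hang : ‖pr F - pr G‖ ≤ χ)
    (hlt : (1 + σ) * χ < 1)
    (hcond : (σ + (1 + σ) * χ) / (1 - (1 + σ) * χ) ≤ κ) :
    cone p σ F ⊆ cone p κ G :=
  cone_lemma_general p F G χ σ κ hχ hκ hang hlt hcond
end

section
/- Angle comparison on two scales: Let p₁, p₂ ∈ Σ ⊂ ℝ^n, 0 < r₁ ≤ r₂, d₁, d₂ ∈ (0, 1/2), and m-planes F₁, F₂ with |p₁ − p₂| < r₁/2. Assume (i) every point ξ ∈ (p₁ + F₁) ∩ B_{r₁}(p₁) satisfies dist(ξ, Σ ∩ B_{r₁}(p₁)) ≤ d₁ r₁, and (ii) every point of Σ ∩ B_{r₂}(p₂) lies within distance d₂ r₂ of the affine plane p₂ + F₂. Then there is a constant C̃ = C̃(m) > √2 depending only on m such that ∠(F₁, F₂) ≤ 2C̃ (d₁ + 2 d₂ r₂/r₁)/(1 − 2d₁). -/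
open Metric Real Filter

/-! Points of `p₁ + F₁` near `p₁` are close to `Σ` by (i), and those points of `Σ`, as well as
`p₁` itself, are close to `p₂ + F₂` by (ii); subtracting the two approximations shows that every
`u ∈ F₁` with `‖u‖ ≤ r₁(1 - 2d₁)/2` lies within `d₁r₁ + 2d₂r₂` of `F₂`. By homogeneity
`dist(v, F₂) ≤ ε‖v‖` on `F₁`, with `ε = 2(d₁ + 2d₂r₂/r₁)/(1 - 2d₁)`. For subspaces of equal
dimension and `ε² ≤ 1/2` this one-sided estimate makes the projection `F₁ → F₂` onto, which yields
the reverse estimate `dist(w, F₁) ≤ √2 ε‖w‖` on `F₂` and then `‖Π_{F₁} - Π_{F₂}‖ ≤ (1 + √2)ε`;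
for larger `ε` the trivial bound `2` suffices. Hence `C̃ = 3` works. -/

namespace Submodule

variable {E : Type*} [NormedAddCommGroup E] [InnerProductSpace ℝ E] {U K : Submodule ℝ E}

lemma norm_sub_starProjection_le [K.HasOrthogonalProjection] (y : E) {w : E} (hw : w ∈ K) :
    ‖y - K.starProjection y‖ ≤ ‖y - w‖ := by
  rw [starProjection_minimal]
  exact ciInf_le ⟨0, by rintro _ ⟨x, rfl⟩; positivity⟩ (⟨w, hw⟩ : K)

lemma norm_sub_starProjection_eq_infDist [K.HasOrthogonalProjection] (y : E) :
    ‖y - K.starProjection y‖ = infDist y K :=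
  le_antisymm
    ((le_infDist ⟨0, K.zero_mem⟩).2 fun w hw => by
      rw [dist_eq_norm]; exact norm_sub_starProjection_le y hw)
    (by rw [← dist_eq_norm]; exact infDist_le_dist_of_mem (K.starProjection_apply_mem y))

lemma norm_sub_starProjection_le_of_forall_norm_le [K.HasOrthogonalProjection] {ρ ε : ℝ}
    (hρ : 0 < ρ) (h : ∀ u ∈ U, ‖u‖ ≤ ρ → ‖u - K.starProjection u‖ ≤ ε * ρ) {v : E} (hv : v ∈ U) :
    ‖v - K.starProjection v‖ ≤ ε * ‖v‖ := by
  rcases eq_or_ne v 0 with rfl | hv0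
  · simp
  have hvpos : 0 < ‖v‖ := norm_pos_iff.2 hv0
  have hc : 0 < ρ / ‖v‖ := by positivity
  have hscaled := h ((ρ / ‖v‖) • v) (U.smul_mem _ hv) (by
    rw [norm_smul, norm_of_nonneg hc.le, div_mul_cancel₀ _ hvpos.ne'])
  rw [map_smul, ← smul_sub, norm_smul, norm_of_nonneg hc.le] at hscaled
  refine le_of_mul_le_mul_left ?_ hc
  calc ρ / ‖v‖ * ‖v - K.starProjection v‖ ≤ ε * ρ := hscaled
    _ = ρ / ‖v‖ * (ε * ‖v‖) := by field_simp

lemma norm_le_sqrt_two_mul_norm_starProjection [K.HasOrthogonalProjection] {ε : ℝ}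
    (hε : ε ^ 2 ≤ 1 / 2) {v : E} (h : ‖v - K.starProjection v‖ ≤ ε * ‖v‖) :
    ‖v‖ ≤ √2 * ‖K.starProjection v‖ := by
  have hpyth : ‖v‖ ^ 2 = ‖K.starProjection v‖ ^ 2 + ‖v - K.starProjection v‖ ^ 2 := by
    rw [norm_sq_eq_add_norm_sq_starProjection v K, starProjection_orthogonal_val]
  have hsq : ‖v - K.starProjection v‖ ^ 2 ≤ ε ^ 2 * ‖v‖ ^ 2 := by
    rw [← mul_pow]; exact pow_le_pow_left₀ (norm_nonneg _) h 2
  rw [← pow_le_pow_iff_left₀ (norm_nonneg _) (by positivity) two_ne_zero, mul_pow,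
    sq_sqrt zero_le_two]
  nlinarith [sq_nonneg ‖v‖]

lemma exists_starProjection_eq [FiniteDimensional ℝ U] [FiniteDimensional ℝ K]
    (hdim : Module.finrank ℝ U = Module.finrank ℝ K)
    (hinj : ∀ v ∈ U, K.starProjection v = 0 → v = 0) {w : E} (hw : w ∈ K) :
    ∃ v ∈ U, K.starProjection v = w := by
  let T : U →ₗ[ℝ] K := K.orthogonalProjectionOnto.toLinearMap ∘ₗ U.subtype
  have hT : Function.Injective T := by
    rw [← LinearMap.ker_eq_bot, eq_bot_iff]
    intro v hv
    exact Subtype.ext (hinj v v.2 (congrArg Subtype.val hv))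
  obtain ⟨v, hv⟩ := (LinearMap.injective_iff_surjective_of_finrank_eq_finrank hdim).1 hT ⟨w, hw⟩
  exact ⟨v, v.2, congrArg Subtype.val hv⟩

lemma norm_sub_starProjection_le_of_finrank_eq [FiniteDimensional ℝ U] [FiniteDimensional ℝ K]
    (hdim : Module.finrank ℝ U = Module.finrank ℝ K) {ε : ℝ} (hε0 : 0 ≤ ε)
    (hε : ε ^ 2 ≤ 1 / 2) (h : ∀ v ∈ U, ‖v - K.starProjection v‖ ≤ ε * ‖v‖)
    {w : E} (hw : w ∈ K) :
    ‖w - U.starProjection w‖ ≤ √2 * ε * ‖w‖ := by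
  have hcomparable : ∀ v ∈ U, ‖v‖ ≤ √2 * ‖K.starProjection v‖ := fun v hv =>
    norm_le_sqrt_two_mul_norm_starProjection hε (h v hv)
  obtain ⟨v, hv, rfl⟩ := exists_starProjection_eq hdim
    (fun v hv h0 => norm_le_zero_iff.1 (by simpa [h0] using hcomparable v hv)) hw
  calc ‖K.starProjection v - U.starProjection (K.starProjection v)‖
      ≤ ‖K.starProjection v - v‖ := norm_sub_starProjection_le _ hv
    _ = ‖v - K.starProjection v‖ := norm_sub_rev _ _
    _ ≤ ε * ‖v‖ := h v hv
    _ ≤ ε * (√2 * ‖K.starProjection v‖) := mul_le_mul_of_nonneg_left (hcomparable v hv) hε0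
    _ = √2 * ε * ‖K.starProjection v‖ := by ring

lemma norm_starProjection_le_of_mem_orthogonal [U.HasOrthogonalProjection]
    [K.HasOrthogonalProjection] {δ : ℝ} (hδ : 0 ≤ δ)
    (h : ∀ w ∈ K, ‖w - U.starProjection w‖ ≤ δ * ‖w‖) {y : E} (hy : y ∈ Uᗮ) :
    ‖K.starProjection y‖ ≤ δ * ‖y‖ := by
  set w := K.starProjection y
  have hw : inner ℝ (w - U.starProjection w) y = ‖w‖ ^ 2 := by
    have hyw : inner ℝ (y - w) w = 0 :=
      K.starProjection_inner_eq_zero y w (K.starProjection_apply_mem y)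
    have hUy : inner ℝ (U.starProjection w) y = 0 :=
      (U.mem_orthogonal y).1 hy _ (U.starProjection_apply_mem w)
    rw [inner_sub_left] at hyw
    rw [inner_sub_left, hUy, sub_zero, ← real_inner_self_eq_norm_sq, real_inner_comm]
    linarith
  have hsq : ‖w‖ * ‖w‖ ≤ ‖w‖ * (δ * ‖y‖) :=
    calc ‖w‖ * ‖w‖ = inner ℝ (w - U.starProjection w) y := by rw [hw, sq]
      _ ≤ ‖w - U.starProjection w‖ * ‖y‖ := real_inner_le_norm _ _
      _ ≤ δ * ‖w‖ * ‖y‖ := by gcongr; exact h w (K.starProjection_apply_mem y)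
      _ = ‖w‖ * (δ * ‖y‖) := by ring
  rcases (norm_nonneg w).eq_or_lt with hw0 | hwpos
  · rw [← hw0]; positivity
  · exact le_of_mul_le_mul_left hsq hwpos

lemma norm_starProjection_sub_starProjection_le [U.HasOrthogonalProjection]
    [K.HasOrthogonalProjection] {a b : ℝ} (ha : 0 ≤ a) (hb : 0 ≤ b)
    (hU : ∀ v ∈ U, ‖v - K.starProjection v‖ ≤ a * ‖v‖)
    (hUperp : ∀ y ∈ Uᗮ, ‖K.starProjection y‖ ≤ b * ‖y‖) :
    ‖U.starProjection - K.starProjection‖ ≤ a + b := by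
  refine ContinuousLinearMap.opNorm_le_bound _ (add_nonneg ha hb) fun x => ?_
  set v := U.starProjection x
  have hsplit : (U.starProjection - K.starProjection) x =
      (v - K.starProjection v) - K.starProjection (x - v) := by
    simp only [sub_apply, map_sub]; abel
  calc ‖(U.starProjection - K.starProjection) x‖
      ≤ ‖v - K.starProjection v‖ + ‖K.starProjection (x - v)‖ := hsplit ▸ norm_sub_le _ _
    _ ≤ a * ‖v‖ + b * ‖x - v‖ :=
        add_le_add (hU v (U.starProjection_apply_mem x))
          (hUperp _ (U.sub_starProjection_mem_orthogonal x))
    _ ≤ a * ‖x‖ + b * ‖x‖ := by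
        gcongr
        · exact U.norm_starProjection_apply_le x
        · simpa using Uᗮ.norm_starProjection_apply_le x
    _ = (a + b) * ‖x‖ := by ring

lemma norm_starProjection_sub_starProjection_le_two [U.HasOrthogonalProjection]
    [K.HasOrthogonalProjection] : ‖U.starProjection - K.starProjection‖ ≤ 2 :=
  (norm_sub_le _ _).trans (by linarith [U.starProjection_norm_le, K.starProjection_norm_le])

lemma norm_starProjection_sub_starProjection_le_three_mul [FiniteDimensional ℝ U]
    [FiniteDimensional ℝ K] (hdim : Module.finrank ℝ U = Module.finrank ℝ K) {ε : ℝ}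
    (hε : 0 ≤ ε) (h : ∀ v ∈ U, ‖v - K.starProjection v‖ ≤ ε * ‖v‖) :
    ‖U.starProjection - K.starProjection‖ ≤ 3 * ε := by
  rcases le_or_gt (ε ^ 2) (1 / 2) with hsmall | hlarge
  · have hK : ∀ w ∈ K, ‖w - U.starProjection w‖ ≤ √2 * ε * ‖w‖ := fun w hw =>
      norm_sub_starProjection_le_of_finrank_eq hdim hε hsmall h hw
    calc ‖U.starProjection - K.starProjection‖ ≤ ε + √2 * ε :=
          norm_starProjection_sub_starProjection_le hε (by positivity) h fun y hy =>
            norm_starProjection_le_of_mem_orthogonal (by positivity) hK hy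
      _ ≤ 3 * ε := by nlinarith [sqrt_two_lt_three_halves]
  · calc ‖U.starProjection - K.starProjection‖ ≤ 2 := norm_starProjection_sub_starProjection_le_two
      _ ≤ 3 * ε := by nlinarith

end Submodule

lemma infDist_sub_le_infDist_add_infDist {E : Type*} [NormedAddCommGroup E] (F : AddSubgroup E)
    (a x y : E) :
    infDist (x - y) F ≤
      infDist x ((fun v => a + v) '' (F : Set E)) +
        infDist y ((fun v => a + v) '' (F : Set E)) := by
  have hne : ((fun v => a + v) '' (F : Set E)).Nonempty := ⟨a, 0, F.zero_mem, add_zero a⟩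
  refine le_of_forall_pos_lt_add fun δ hδ => ?_
  obtain ⟨_, ⟨w₁, hw₁, rfl⟩, hx⟩ :=
    (infDist_lt_iff hne).1 (lt_add_of_pos_right (infDist x _) (half_pos hδ))
  obtain ⟨_, ⟨w₀, hw₀, rfl⟩, hy⟩ :=
    (infDist_lt_iff hne).1 (lt_add_of_pos_right (infDist y _) (half_pos hδ))
  calc infDist (x - y) F ≤ dist (x - y) (w₁ - w₀) := infDist_le_dist_of_mem (F.sub_mem hw₁ hw₀)
    _ ≤ dist x (a + w₁) + dist y (a + w₀) := by
        rw [dist_eq_norm, dist_eq_norm, dist_eq_norm,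
          show x - y - (w₁ - w₀) = (x - (a + w₁)) - (y - (a + w₀)) by abel]
        exact norm_sub_le _ _
    _ < _ := by linarith

lemma infDist_le_of_two_scales {E : Type*} [NormedAddCommGroup E] {Sig F₁ : Set E}
    {F₂ : AddSubgroup E} {p₁ p₂ u : E} {r₁ r₂ d₁ d₂ : ℝ} (hp₁ : p₁ ∈ Sig) (hr₁ : 0 < r₁)
    (hr : r₁ ≤ r₂) (hd₁ : 0 ≤ d₁) (hpp : ‖p₁ - p₂‖ < r₁ / 2)
    (h₁ : ∀ ξ ∈ ((fun v => p₁ + v) '' F₁) ∩ ball p₁ r₁, infDist ξ (Sig ∩ ball p₁ r₁) ≤ d₁ * r₁)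
    (h₂ : ∀ z ∈ Sig ∩ ball p₂ r₂,
      infDist z (((fun v => p₂ + v) '' (F₂ : Set E)) ∩ ball p₂ r₂) ≤ d₂ * r₂)
    (hu : u ∈ F₁) (hu_le : d₁ * r₁ + ‖u‖ ≤ r₁ / 2) :
    infDist u F₂ ≤ d₁ * r₁ + 2 * (d₂ * r₂) := by
  have hr₂ : 0 < r₂ := hr₁.trans_le hr
  have hne₂ : ((fun v => p₂ + v) '' (F₂ : Set E) ∩ ball p₂ r₂).Nonempty :=
    ⟨p₂, ⟨0, F₂.zero_mem, add_zero p₂⟩, mem_ball_self hr₂⟩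
  have hplane : ∀ z ∈ Sig ∩ ball p₂ r₂, infDist z ((fun v => p₂ + v) '' (F₂ : Set E)) ≤ d₂ * r₂ :=
    fun z hz => (infDist_le_infDist_of_subset Set.inter_subset_left hne₂).trans (h₂ z hz)
  have hp₁₂ : p₁ ∈ Sig ∩ ball p₂ r₂ := ⟨hp₁, by rw [mem_ball, dist_eq_norm]; linarith⟩
  have hξ : p₁ + u ∈ ((fun v => p₁ + v) '' F₁) ∩ ball p₁ r₁ :=
    ⟨⟨u, hu, rfl⟩, by
      rw [mem_ball, dist_eq_norm, add_sub_cancel_left]; nlinarith [mul_nonneg hd₁ hr₁.le]⟩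
  have hne₁ : (Sig ∩ ball p₁ r₁).Nonempty := ⟨p₁, hp₁, mem_ball_self hr₁⟩
  refine le_of_forall_pos_lt_add fun δ hδ => ?_
  -- the slack is capped so that the point `s` found near `p₁ + u` stays in `ball p₂ r₂`
  obtain ⟨s, ⟨hsSig, -⟩, hs⟩ := (infDist_lt_iff hne₁).1
    ((h₁ _ hξ).trans_lt (lt_add_of_pos_right _ (lt_min hδ (by linarith : 0 < r₁ / 2 - ‖p₁ - p₂‖))))
  have hs₂ : s ∈ ball p₂ r₂ := by
    rw [mem_ball]
    calc dist s p₂ ≤ dist s (p₁ + u) + dist (p₁ + u) p₁ + dist p₁ p₂ := dist_triangle4 _ _ _ _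
      _ < r₂ := by
        rw [dist_comm s, dist_self_add_left, dist_eq_norm p₁]
        linarith [min_le_right δ (r₁ / 2 - ‖p₁ - p₂‖)]
  calc infDist u F₂ ≤ infDist (s - p₁) F₂ + dist u (s - p₁) := infDist_le_infDist_add_dist
    _ ≤ (infDist s ((fun v => p₂ + v) '' (F₂ : Set E)) +
          infDist p₁ ((fun v => p₂ + v) '' (F₂ : Set E))) + dist (p₁ + u) s := by
        rw [dist_eq_norm, dist_eq_norm, show u - (s - p₁) = p₁ + u - s by abel]
        exact add_le_add (infDist_sub_le_infDist_add_infDist F₂ p₂ s p₁) le_rfl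
    _ < (d₂ * r₂ + d₂ * r₂) + (d₁ * r₁ + δ) :=
        add_lt_add_of_le_of_lt (add_le_add (hplane s ⟨hsSig, hs₂⟩) (hplane p₁ hp₁₂))
          (hs.trans_le (add_le_add_right (min_le_left _ _) _))
    _ = d₁ * r₁ + 2 * (d₂ * r₂) + δ := by ring

theorem angle_two_scales_general (m : ℕ) :
    ∃ C : ℝ, Real.sqrt 2 < C ∧
      ∀ (n : ℕ) (Sig : Set (EuclideanSpace ℝ (Fin n)))
        (p₁ p₂ : EuclideanSpace ℝ (Fin n)) (r₁ r₂ d₁ d₂ : ℝ)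
        (F₁ F₂ : Submodule ℝ (EuclideanSpace ℝ (Fin n))),
        Module.finrank ℝ F₁ = m → Module.finrank ℝ F₂ = m →
        p₁ ∈ Sig → p₂ ∈ Sig → 0 < r₁ → r₁ ≤ r₂ →
        d₁ ∈ Set.Ioo (0 : ℝ) (1 / 2) → d₂ ∈ Set.Ioo (0 : ℝ) (1 / 2) →
        ‖p₁ - p₂‖ < r₁ / 2 →
        (∀ ξ ∈ ((fun v => p₁ + v) '' (F₁ : Set (EuclideanSpace ℝ (Fin n)))) ∩ ball p₁ r₁,
          Metric.infDist ξ (Sig ∩ ball p₁ r₁) ≤ d₁ * r₁) →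
        (∀ z ∈ Sig ∩ ball p₂ r₂,
          Metric.infDist z
            (((fun v => p₂ + v) '' (F₂ : Set (EuclideanSpace ℝ (Fin n)))) ∩ ball p₂ r₂)
            ≤ d₂ * r₂) →
        ‖pr F₁ - pr F₂‖ ≤ 2 * C * (d₁ + 2 * d₂ * r₂ / r₁) / (1 - 2 * d₁) := by
  refine ⟨3, by linarith [sqrt_two_lt_three_halves], ?_⟩
  intro n Sig p₁ p₂ r₁ r₂ d₁ d₂ F₁ F₂ hF₁ hF₂ hp₁ _ hr₁ hr hd₁ hd₂ hpp h₁ h₂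
  obtain ⟨hd₁0, hd₁half⟩ := hd₁
  have hr₂ : 0 < r₂ := hr₁.trans_le hr
  have hd₂0 : 0 < d₂ := hd₂.1
  have hgap : 0 < 1 - 2 * d₁ := by linarith
  set ε := 2 * (d₁ + 2 * d₂ * r₂ / r₁) / (1 - 2 * d₁) with hε
  have hclose : ∀ v ∈ F₁, ‖v - F₂.starProjection v‖ ≤ ε * ‖v‖ := by
    refine fun v hv => Submodule.norm_sub_starProjection_le_of_forall_norm_le
      (ρ := r₁ * (1 - 2 * d₁) / 2) (by positivity) (fun u hu hu_le => ?_) hv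
    rw [Submodule.norm_sub_starProjection_eq_infDist]
    calc infDist u F₂ ≤ d₁ * r₁ + 2 * (d₂ * r₂) :=
          infDist_le_of_two_scales (F₂ := F₂.toAddSubgroup) hp₁ hr₁ hr hd₁0.le hpp h₁ h₂ hu
            (by linarith)
      _ = ε * (r₁ * (1 - 2 * d₁) / 2) := by
          rw [hε, div_mul_div_comm, eq_div_iff (by positivity)]; field_simp
  calc ‖pr F₁ - pr F₂‖ ≤ 3 * ε :=
        Submodule.norm_starProjection_sub_starProjection_le_three_mul (hF₁.trans hF₂.symm)
          (by rw [hε]; positivity) hclose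
    _ = 2 * 3 * (d₁ + 2 * d₂ * r₂ / r₁) / (1 - 2 * d₁) := by rw [hε]; ring

/-- Angle comparison on two scales: there is a constant `C̃ = C̃(m) > √2`
such that whenever `Σ` is `d₁`-close from the plane side at `(p₁,F₁,r₁)` and
`d₂`-flat at `(p₂,F₂,r₂)`, with `|p₁-p₂| < r₁/2` and `r₁ ≤ r₂`, one has
`∠(F₁,F₂) ≤ 2C̃ (d₁ + 2 d₂ r₂/r₁)/(1-2d₁)`. -/
theorem angle_two_scales (m : ℕ) (hm : 1 ≤ m) :
    ∃ C : ℝ, Real.sqrt 2 < C ∧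
      ∀ (n : ℕ) (Sig : Set (EuclideanSpace ℝ (Fin n)))
        (p₁ p₂ : EuclideanSpace ℝ (Fin n)) (r₁ r₂ d₁ d₂ : ℝ)
        (F₁ F₂ : Submodule ℝ (EuclideanSpace ℝ (Fin n))),
        Module.finrank ℝ F₁ = m → Module.finrank ℝ F₂ = m →
        p₁ ∈ Sig → p₂ ∈ Sig → 0 < r₁ → r₁ ≤ r₂ →
        d₁ ∈ Set.Ioo (0 : ℝ) (1 / 2) → d₂ ∈ Set.Ioo (0 : ℝ) (1 / 2) →
        ‖p₁ - p₂‖ < r₁ / 2 →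
        (∀ ξ ∈ ((fun v => p₁ + v) '' (F₁ : Set (EuclideanSpace ℝ (Fin n)))) ∩ ball p₁ r₁,
          Metric.infDist ξ (Sig ∩ ball p₁ r₁) ≤ d₁ * r₁) →
        (∀ z ∈ Sig ∩ ball p₂ r₂,
          Metric.infDist z
            (((fun v => p₂ + v) '' (F₂ : Set (EuclideanSpace ℝ (Fin n)))) ∩ ball p₂ r₂)
            ≤ d₂ * r₂) →
        ‖pr F₁ - pr F₂‖ ≤ 2 * C * (d₁ + 2 * d₂ * r₂ / r₁) / (1 - 2 * d₁) :=
  angle_two_scales_general m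
end
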